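/- For n ≥ 1 and the powerset Boolean algebra B of an m-element set, the set B_n^B of snapshots has exactly (n+2)^m elements. -/
import Mathlib


def IsSnapshot {B : Type*} [BooleanAlgebra B] (n : ℕ) (z : Fin (n + 1) → B) : Prop :=
  ∀ k : Fin (n + 1), 1 ≤ (k : ℕ) → (Finset.Iio k).inf z ⊔ z k = ⊤

lemma snap_unique {m n : ℕ} {z : Fin (n + 1) → Finset (Fin m)} (hz : IsSnapshot n z)
    {x : Fin m} {j k : Fin (n + 1)} (hj : x ∉ z j) (hk : x ∉ z k) : j = k := by
  have aux : ∀ j k : Fin (n + 1), j < k → x ∉ z j → x ∉ z k → False := by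
    intro j k hlt hj hk
    have hk1 : 1 ≤ (k : ℕ) := by
      have := Fin.lt_def.mp hlt; omega
    have heq := hz k hk1
    have hx : x ∈ (Finset.Iio k).inf z ⊔ z k := heq ▸ Finset.mem_univ x
    rw [Finset.sup_eq_union, Finset.mem_union] at hx
    rcases hx with h | h
    · exact hj (Finset.mem_inf.mp h j (Finset.mem_Iio.mpr hlt))
    · exact hk h
  rcases lt_trichotomy j k with h | h | h
  · exact absurd (aux j k h hj hk) (by simp)
  · exact h
  · exact absurd (aux k j h hk hj) (by simp)

theorem stmt4 (m n : ℕ) (hn : 1 ≤ n) :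
    Nat.card {z : Fin (n + 1) → Finset (Fin m) // IsSnapshot n z} = (n + 2) ^ m := by
  have e : {z : Fin (n + 1) → Finset (Fin m) // IsSnapshot n z} ≃ (Fin m → Fin (n + 2)) := by
    refine
      { toFun := fun z x =>
          if h : ∃ k : Fin (n + 1), x ∉ z.1 k then (Fin.castSucc h.choose) else Fin.last (n + 1)
        invFun := fun f =>
          ⟨fun k => Finset.univ.filter (fun x => (f x : ℕ) ≠ (k : ℕ)), ?_⟩
        left_inv := ?_
        right_inv := ?_ }
    · intro k hk
      ext x
      simp only [Finset.sup_eq_union, Finset.mem_union, Finset.mem_filter, Finset.mem_univ,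
        true_and, Finset.mem_inf, Finset.top_eq_univ, iff_true]
      by_cases h : (f x : ℕ) = (k : ℕ)
      · left
        intro i hi
        have hik : (i : ℕ) < (k : ℕ) := Fin.lt_def.mp (Finset.mem_Iio.mp hi)
        simp only [Finset.mem_filter, Finset.mem_univ, true_and, ne_eq]
        omega
      · right; simpa using h
    · rintro ⟨z, hz⟩
      ext k x
      simp only [Finset.mem_filter, Finset.mem_univ, true_and]
      by_cases h : ∃ j : Fin (n + 1), x ∉ z j
      · simp only [h, dif_pos]
        have hc := h.choose_spec
        constructor
        · intro hne
          by_contra hxk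
          have : h.choose = k := snap_unique hz hc hxk
          exact hne (by simp [this])
        · intro hxk heq
          have : h.choose = k := Fin.ext (by simpa using heq)
          exact hc (this ▸ hxk)
      · rw [dif_neg h]
        push_neg at h
        have hk := k.isLt
        simp only [Fin.val_last, h k, iff_true]
        omega
    · intro f
      funext x
      dsimp only
      by_cases h : ∃ k : Fin (n + 1), x ∉ Finset.univ.filter (fun y => (f y : ℕ) ≠ (k : ℕ))
      · rw [dif_pos h]
        have hc := h.choose_spec
        simp only [Finset.mem_filter, Finset.mem_univ, true_and, not_not] at hc
        exact Fin.ext (by simpa using hc.symm)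
      · rw [dif_neg h]
        push_neg at h
        have h' : ∀ k : Fin (n + 1), (f x : ℕ) ≠ (k : ℕ) := fun k => by
          have := h k; simp only [Finset.mem_filter, Finset.mem_univ, true_and] at this
          exact this
        have hfx : (f x : ℕ) = n + 1 := by
          have hlt := (f x).isLt
          by_contra hne
          exact h' ⟨(f x : ℕ), by omega⟩ (by simp)
        exact (Fin.ext (by simp [hfx])).symm
  rw [Nat.card_congr e]
  simp [Nat.card_eq_fintype_card]
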